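/- Let Γ = (N, A, u) be a normal form game with n ≥ 3 players in which all players have the same strategy set. The following conditions are equivalent: (i) Γ is fully symmetric (for each i ∈ N and π ∈ S_N, u_i = u_{π(i)} ∘ π) and u_i = u_j for all i, j ∈ N; (ii) for each i ∈ N and π ∈ S_N, u_i = u_{π(i)} ∘ π⁻¹. -/

import Mathlib

/-- The left action of a player permutation `π` on strategy profiles:
`(π s) i = s (π⁻¹ i)`. -/
def permAct {N A : Type*} (π : Equiv.Perm N) (s : N → A) : N → A :=
  fun i => s (π⁻¹ i)

/-!
Read with `π⁻¹`, condition (ii) says `u (π i) = u i ∘ permAct π`. Since `permAct` is a left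
action, precomposition with it is a right action, so `u ((π * ρ) i) = u ((ρ * π) i)` for all
`π ρ`. With a third player `c ∉ {a, b}`, the transpositions `π = (a b)` and `ρ = (a c)` give
`(π * ρ) c = b` and `(ρ * π) c = a`, so `u a = u b`. Given a common utility, (i) and (ii) are
the same condition, as `π` and `π⁻¹` range over the same group.
-/

section

variable {N A X : Type*}

theorem permAct_one (s : N → A) : permAct 1 s = s := rfl

theorem permAct_mul (π ρ : Equiv.Perm N) (s : N → A) :
    permAct (π * ρ) s = permAct π (permAct ρ s) := rfl

theorem permAct_inv_permAct (π : Equiv.Perm N) (s : N → A) :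
    permAct π⁻¹ (permAct π s) = s := by
  rw [← permAct_mul, inv_mul_cancel, permAct_one]

theorem apply_perm_eq_comp_permAct {u : N → (N → A) → X}
    (h : ∀ (i : N) (π : Equiv.Perm N), u i = fun s => u (π i) (permAct π⁻¹ s))
    (i : N) (π : Equiv.Perm N) : u (π i) = fun s => u i (permAct π s) := by
  funext s
  rw [h i π]
  simp only [permAct_inv_permAct]

theorem apply_mul_apply_comm_of_invariant {u : N → (N → A) → X}
    (h : ∀ (i : N) (π : Equiv.Perm N), u i = fun s => u (π i) (permAct π⁻¹ s))
    (π ρ : Equiv.Perm N) (i : N) : u ((π * ρ) i) = u ((ρ * π) i) := by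
  rw [apply_perm_eq_comp_permAct h i (π * ρ), Equiv.Perm.mul_apply,
    apply_perm_eq_comp_permAct h, apply_perm_eq_comp_permAct h]
  simp only [permAct_mul]

theorem apply_eq_apply_of_apply_mul_comm [Fintype N] (hN : 3 ≤ Fintype.card N) {v : N → X}
    (hv : ∀ (π ρ : Equiv.Perm N) (i : N), v ((π * ρ) i) = v ((ρ * π) i)) (a b : N) :
    v a = v b := by
  classical
  obtain ⟨c, hca, hcb⟩ := ENat.exists_ne_ne_of_three_le (by simpa using hN) a b
  have := hv (Equiv.swap a b) (Equiv.swap a c) c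
  simp only [Equiv.Perm.mul_apply, Equiv.swap_apply_right, Equiv.swap_apply_left,
    Equiv.swap_apply_of_ne_of_ne hca hcb] at this
  exact this.symm

end

theorem fully_symmetric_common_utility_iff_general {N A : Type*} [Fintype N]
    (hN : 3 ≤ Fintype.card N) (u : N → (N → A) → ℝ) :
    ((∀ (i : N) (π : Equiv.Perm N), u i = fun s => u (π i) (permAct π s)) ∧
      ∀ i j : N, u i = u j) ↔
    (∀ (i : N) (π : Equiv.Perm N), u i = fun s => u (π i) (permAct π⁻¹ s)) := by
  constructor
  · rintro ⟨hsym, hcommon⟩ i π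
    rw [hsym i π⁻¹, hcommon (π⁻¹ i) (π i)]
  · intro h
    have hcommon : ∀ i j : N, u i = u j :=
      apply_eq_apply_of_apply_mul_comm hN (apply_mul_apply_comm_of_invariant h)
    refine ⟨fun i π => ?_, hcommon⟩
    rw [h i π⁻¹, inv_inv, hcommon (π⁻¹ i) (π i)]

/-- For a game with at least three players, full symmetry together with all players
having the same utility function is equivalent to the condition
`u_i = u_{π(i)} ∘ π⁻¹` for all `i ∈ N` and `π ∈ S_N`. -/
theorem fully_symmetric_common_utility_iff {N A : Type*} [Fintype N]
    [Fintype A] [Nonempty A] (hN : 3 ≤ Fintype.card N) (u : N → (N → A) → ℝ) :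
    ((∀ (i : N) (π : Equiv.Perm N), u i = fun s => u (π i) (permAct π s)) ∧
      ∀ i j : N, u i = u j) ↔
    (∀ (i : N) (π : Equiv.Perm N), u i = fun s => u (π i) (permAct π⁻¹ s)) :=
  fully_symmetric_common_utility_iff_general hN u
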